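/- arXiv:2403.08977 — 8 statements merged into one kernel-verified Lean document; each statement's English description precedes it below -/
import Mathlib

section
/- Let a,b,c,a',b',c' ∈ ℝ² and d : ℝ² × ℝ² → ℝ symmetric. Define the six sets H(a,b), H(b,c), H(c,a), h(a,b), h(b,c), h(c,a) by: H(a,b) = {x : d(a,b') - d(b,b') ≤ d(a,x) - d(b,x)}, H(b,c) = {x : d(b,c') - d(c,c') ≤ d(b,x) - d(c,x)}, H(c,a) = {x : d(c,a') - d(a,a') ≤ d(c,x) - d(a,x)}, h(a,b) = {x : d(a,x) - d(b,x) ≤ d(a,a') - d(b,a')}, h(b,c) = {x : d(b,x) - d(c,x) ≤ d(b,b') - d(c,b')}, h(c,a) = {x : d(c,x) - d(a,x) ≤ d(c,c') - d(a,c')}. If the five intersections H(a,b) ∩ H(b,c) ∩ H(c,a), h(a,b) ∩ h(b,c) ∩ h(c,a), H(a,b) ∩ h(a,b), H(b,c) ∩ h(b,c), and H(c,a) ∩ h(c,a) are all nonempty, then the matching {(a,a'),(b,b'),(c,c')} is max-sum: for every permutation σ of {a',b',c'}, d(a,σ(a')) + d(b,σ(b')) + d(c,σ(c')) ≤ d(a,a')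 + d(b,b') + d(c,c'). -/
/-!
Evaluating each nonempty intersection at one of its points eliminates the point: the three
pairwise intersections give the inequalities saying that swapping two partners does not increase
the total, and in the two triple intersections the differences telescope around the cycle
`a → b → c → a`, giving the same for the two cyclic reassignments. Those are all five
non-identity permutations of three partners.
-/

open Equiv

theorem Set.Nonempty.le_of_inter {α β : Type*} [Preorder β] {f : α → β} {u v : β}
    (h : ({x | u ≤ f x} ∩ {x | f x ≤ v}).Nonempty) : u ≤ v :=
  let ⟨_, hu, hv⟩ := h
  hu.trans hv

section Cyclic

variable {α G : Type*} [AddCommGroup G] [PartialOrder G] [IsOrderedAddMonoid G]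
  {f g h : α → G} {u v w : G}

theorem Set.Nonempty.add_add_nonpos_of_cyclic
    (hne : ({x | u ≤ f x - g x} ∩ {x | v ≤ g x - h x} ∩ {x | w ≤ h x - f x}).Nonempty) :
    u + v + w ≤ 0 := by
  obtain ⟨x, ⟨hu, hv⟩, hw⟩ := hne
  calc u + v + w ≤ (f x - g x) + (g x - h x) + (h x - f x) := add_le_add (add_le_add hu hv) hw
    _ = 0 := by abel

theorem Set.Nonempty.add_add_nonneg_of_cyclic
    (hne : ({x | f x - g x ≤ u} ∩ {x | g x - h x ≤ v} ∩ {x | h x - f x ≤ w}).Nonempty) :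
    0 ≤ u + v + w := by
  obtain ⟨x, ⟨hu, hv⟩, hw⟩ := hne
  calc 0 = (f x - g x) + (g x - h x) + (h x - f x) := by abel
    _ ≤ u + v + w := add_le_add (add_le_add hu hv) hw

end Cyclic

theorem Equiv.Perm.fin_three_cases (σ : Perm (Fin 3)) :
    σ = 1 ∨ σ = swap 0 1 ∨ σ = swap 1 2 ∨ σ = swap 0 2 ∨ σ = finRotate 3 ∨
      σ = (finRotate 3).symm := by
  revert σ
  decide

theorem sum_perm_le_of_swap_of_rotate {α β G : Type*} [AddCommMonoid G] [PartialOrder G]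
    [IsOrderedAddMonoid G] (d : α → β → G) (a b c : α) (a' b' c' : β)
    (hab : d a b' + d b a' ≤ d a a' + d b b') (hbc : d b c' + d c b' ≤ d b b' + d c c')
    (hac : d a c' + d c a' ≤ d a a' + d c c')
    (hrot : d a b' + d b c' + d c a' ≤ d a a' + d b b' + d c c')
    (hrot' : d a c' + d b a' + d c b' ≤ d a a' + d b b' + d c c')
    (σ : Perm (Fin 3)) :
    ∑ i, d (![a, b, c] i) (![a', b', c'] (σ i)) ≤ d a a' + d b b' + d c c' := by
  rcases σ.fin_three_cases with rfl | rfl | rfl | rfl | rfl | rfl <;>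
    simp only [Fin.sum_univ_three, Perm.coe_one, id_eq, swap_apply_left, swap_apply_right,
      swap_apply_of_ne_of_ne, finRotate_apply, finRotate_symm_apply, ne_eq, Fin.reduceEq,
      Fin.reduceAdd, Fin.reduceSub, not_false_eq_true, Matrix.cons_val_zero,
      Matrix.cons_val_one, Matrix.cons_val]
  · exact le_rfl
  · exact add_le_add_left hab _
  · simpa only [add_assoc] using add_le_add_right hbc _
  · simpa only [add_right_comm _ (d b b')] using add_le_add_left hac _
  · exact hrot
  · exact hrot'

theorem five_intersections_imply_maxsum_general
    (d : EuclideanSpace ℝ (Fin 2) → EuclideanSpace ℝ (Fin 2) → ℝ)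
    (a b c a' b' c' : EuclideanSpace ℝ (Fin 2))
    (h1 : ({x | d a b' - d b b' ≤ d a x - d b x} ∩
           {x | d b c' - d c c' ≤ d b x - d c x} ∩
           {x | d c a' - d a a' ≤ d c x - d a x}).Nonempty)
    (h2 : ({x | d a x - d b x ≤ d a a' - d b a'} ∩
           {x | d b x - d c x ≤ d b b' - d c b'} ∩
           {x | d c x - d a x ≤ d c c' - d a c'}).Nonempty)
    (h3 : ({x | d a b' - d b b' ≤ d a x - d b x} ∩
           {x | d a x - d b x ≤ d a a' - d b a'}).Nonempty)
    (h4 : ({x | d b c' - d c c' ≤ d b x - d c x} ∩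
           {x | d b x - d c x ≤ d b b' - d c b'}).Nonempty)
    (h5 : ({x | d c a' - d a a' ≤ d c x - d a x} ∩
           {x | d c x - d a x ≤ d c c' - d a c'}).Nonempty) :
    ∀ σ : Equiv.Perm (Fin 3),
      ∑ i, d (![a, b, c] i) (![a', b', c'] (σ i)) ≤ d a a' + d b b' + d c c' := by
  have hca := h5.le_of_inter
  have hrot := h1.add_add_nonpos_of_cyclic
  have hrot' := h2.add_add_nonneg_of_cyclic
  exact sum_perm_le_of_swap_of_rotate d a b c a' b' c'
    (sub_le_sub_iff.mp h3.le_of_inter) (sub_le_sub_iff.mp h4.le_of_inter)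
    (by linarith) (by linarith) (by linarith)

theorem five_intersections_imply_maxsum
    (d : EuclideanSpace ℝ (Fin 2) → EuclideanSpace ℝ (Fin 2) → ℝ)
    (hsymm : ∀ x y, d x y = d y x)
    (a b c a' b' c' : EuclideanSpace ℝ (Fin 2))
    (h1 : ({x | d a b' - d b b' ≤ d a x - d b x} ∩
           {x | d b c' - d c c' ≤ d b x - d c x} ∩
           {x | d c a' - d a a' ≤ d c x - d a x}).Nonempty)
    (h2 : ({x | d a x - d b x ≤ d a a' - d b a'} ∩
           {x | d b x - d c x ≤ d b b' - d c b'} ∩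
           {x | d c x - d a x ≤ d c c' - d a c'}).Nonempty)
    (h3 : ({x | d a b' - d b b' ≤ d a x - d b x} ∩
           {x | d a x - d b x ≤ d a a' - d b a'}).Nonempty)
    (h4 : ({x | d b c' - d c c' ≤ d b x - d c x} ∩
           {x | d b x - d c x ≤ d b b' - d c b'}).Nonempty)
    (h5 : ({x | d c a' - d a a' ≤ d c x - d a x} ∩
           {x | d c x - d a x ≤ d c c' - d a c'}).Nonempty) :
    ∀ σ : Equiv.Perm (Fin 3),
      ∑ i, d (![a, b, c] i) (![a', b', c'] (σ i)) ≤ d a a' + d b b' + d c c' :=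
  five_intersections_imply_maxsum_general d a b c a' b' c' h1 h2 h3 h4 h5
end

section
/- Let a ≠ b and a', b' ∈ ℝ² with ‖a-a'‖² + ‖b-b'‖² ≥ ‖a-b'‖² + ‖b-a'‖². Let z ∈ ℝ² satisfy ⟨b-a, b'⟩ ≤ ⟨b-a, z⟩ ≤ ⟨b-a, a'⟩, and let z* be the orthogonal projection of z onto the line through a and b. If z* lies on the segment ab, then z* belongs to both disks B(aa') and B(bb') (disks with diameters aa' and bb'). -/
open scoped RealInnerProductSpace

lemma mem_disk_iff_inner_nonpos (p q x : EuclideanSpace ℝ (Fin 2)) :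
    x ∈ Metric.closedBall (midpoint ℝ p q) (dist p q / 2) ↔ ⟪x - p, x - q⟫ ≤ 0 := by
  have hm : midpoint ℝ p q = (2:ℝ)⁻¹ • (p + q) := by
    rw [midpoint_eq_smul_add, invOf_eq_inv]
  have key : ‖x - midpoint ℝ p q‖ ^ 2 = ‖p - q‖ ^ 2 / 4 + ⟪x - p, x - q⟫ := by
    rw [← real_inner_self_eq_norm_sq, ← real_inner_self_eq_norm_sq, hm]
    simp only [inner_sub_left, inner_sub_right, inner_add_left, inner_add_right,
      inner_smul_left, inner_smul_right, conj_trivial, real_inner_comm p x,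
      real_inner_comm q x, real_inner_comm q p]
    ring
  rw [Metric.mem_closedBall, dist_eq_norm, dist_eq_norm]
  constructor
  · intro h
    have h2 := pow_le_pow_left₀ (norm_nonneg _) h 2
    rw [key] at h2
    nlinarith [h2]
  · intro h
    have h2 : ‖x - midpoint ℝ p q‖ ^ 2 ≤ (‖p - q‖ / 2) ^ 2 := by rw [key]; nlinarith
    nlinarith [norm_nonneg (x - midpoint ℝ p q), norm_nonneg (p - q), h2]

theorem projection_in_segment_in_both_disks
    (a b a' b' : EuclideanSpace ℝ (Fin 2)) (hab : a ≠ b)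
    (hmax : ‖a - b'‖ ^ 2 + ‖b - a'‖ ^ 2 ≤ ‖a - a'‖ ^ 2 + ‖b - b'‖ ^ 2)
    (z zs : EuclideanSpace ℝ (Fin 2))
    (hz : ⟪b - a, b'⟫ ≤ ⟪b - a, z⟫ ∧ ⟪b - a, z⟫ ≤ ⟪b - a, a'⟫)
    (hzs_line : ∃ t : ℝ, zs = a + t • (b - a))
    (hzs_perp : ⟪b - a, z - zs⟫ = 0)
    (hseg : zs ∈ segment ℝ a b) :
    zs ∈ Metric.closedBall (midpoint ℝ a a') (dist a a' / 2) ∧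
    zs ∈ Metric.closedBall (midpoint ℝ b b') (dist b b' / 2) := by
  obtain ⟨s, u, hs0, hu0, hsu, hzs⟩ := hseg
  set v := b - a with hv
  have hzs' : zs = a + u • v := by
    rw [← hzs, hv]; rw [show s = 1 - u by linarith]; module
  have hvz : ⟪v, z⟫ = ⟪v, zs⟫ := by
    have := hzs_perp
    rw [inner_sub_right] at this
    linarith
  have hvzs : ⟪v, zs⟫ = ⟪v, a⟫ + u * ⟪v, v⟫ := by
    rw [hzs', inner_add_right, inner_smul_right]
  constructor
  · rw [mem_disk_iff_inner_nonpos]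
    have h1 : zs - a = u • v := by rw [hzs']; abel
    have h2 : ⟪zs - a, zs - a'⟫ = u * (⟪v, a⟫ + u * ⟪v, v⟫ - ⟪v, a'⟫) := by
      rw [h1, inner_smul_left, hzs']
      have : a + u • v - a' = (a - a') + u • v := by abel
      rw [this, inner_add_right, inner_smul_right, inner_sub_right]
      simp only [conj_trivial]
      ring
    rw [h2]
    have h3 : ⟪v, a⟫ + u * ⟪v, v⟫ ≤ ⟪v, a'⟫ := by
      have := hz.2; rw [hvz, hvzs] at this; linarith
    exact mul_nonpos_of_nonneg_of_nonpos hu0 (by linarith)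
  · rw [mem_disk_iff_inner_nonpos]
    have h1 : zs - b = (u - 1) • v := by rw [hzs', hv]; module
    have h2 : ⟪zs - b, zs - b'⟫ = (u - 1) * ⟪v, zs - b'⟫ := by
      rw [h1, inner_smul_left]; simp only [conj_trivial]
    rw [h2]
    have h3 : (0:ℝ) ≤ ⟪v, zs - b'⟫ := by
      rw [inner_sub_right, ← hvz]
      linarith [hz.1]
    have h4 : u - 1 ≤ 0 := by linarith
    exact mul_nonpos_of_nonpos_of_nonneg h4 h3
end

section
/- Let a ≠ b and a', b' ∈ ℝ² with ‖a-a'‖² + ‖b-b'‖² ≥ ‖a-b'‖² + ‖b-a'‖². Let z ∈ ℝ² satisfy ⟨b-a, b'⟩ ≤ ⟨b-a, z⟩ ≤ ⟨b-a, a'⟩ and let z* be the orthogonal projection of z onto the line ℓ(ab). If z* lies on the ray from a through b but outside the segment ab, then both z* and b belong to the disk B(aa') with diameter aa'. -/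
open scoped RealInnerProductSpace

lemma mem_disk_of_inner_nonpos {E : Type*} [NormedAddCommGroup E] [InnerProductSpace ℝ E]
    (a a' x : E) (h : ⟪x - a, x - a'⟫ ≤ 0) :
    x ∈ Metric.closedBall (midpoint ℝ a a') (dist a a' / 2) := by
  rw [Metric.mem_closedBall, dist_eq_norm, dist_eq_norm]
  have h1 : x - midpoint ℝ a a' = (1/2 : ℝ) • ((x - a) + (x - a')) := by
    rw [midpoint_eq_smul_add, invOf_eq_inv]
    module
  have h2 : a - a' = (x - a') - (x - a) := by abel
  rw [h1, h2, norm_smul]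
  have key : ‖(x - a) + (x - a')‖ ≤ ‖(x - a') - (x - a)‖ := by
    have := norm_add_sq_real (x - a) (x - a')
    have h4 := norm_sub_sq_real (x - a') (x - a)
    rw [real_inner_comm] at h4
    nlinarith [norm_nonneg ((x - a) + (x - a')), norm_nonneg ((x - a') - (x - a))]
  rw [Real.norm_eq_abs, abs_of_nonneg (by norm_num : (0:ℝ) ≤ 1/2)]
  linarith

theorem projection_beyond_segment_in_disk
    (a b a' b' : EuclideanSpace ℝ (Fin 2)) (hab : a ≠ b)
    (hmax : ‖a - b'‖ ^ 2 + ‖b - a'‖ ^ 2 ≤ ‖a - a'‖ ^ 2 + ‖b - b'‖ ^ 2)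
    (z zs : EuclideanSpace ℝ (Fin 2))
    (hz : ⟪b - a, b'⟫ ≤ ⟪b - a, z⟫ ∧ ⟪b - a, z⟫ ≤ ⟪b - a, a'⟫)
    (hzs_perp : ⟪b - a, z - zs⟫ = 0)
    (hray : ∃ t : ℝ, 1 < t ∧ zs = a + t • (b - a)) :
    zs ∈ Metric.closedBall (midpoint ℝ a a') (dist a a' / 2) ∧
    b ∈ Metric.closedBall (midpoint ℝ a a') (dist a a' / 2) := by
  obtain ⟨t, ht, hzs⟩ := hray
  have hinner_zs : ⟪b - a, zs⟫ = ⟪b - a, z⟫ := by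
    have := hzs_perp
    rw [inner_sub_right] at this
    linarith
  have hkey : ⟪b - a, zs⟫ ≤ ⟪b - a, a'⟫ := hinner_zs ▸ hz.2
  have hv : 0 < ‖b - a‖ ^ 2 := by
    have h0 : b - a ≠ 0 := sub_ne_zero.mpr (Ne.symm hab)
    exact pow_pos (norm_pos_iff.mpr h0) 2
  have hzs_expand : ⟪b - a, zs⟫ = ⟪b - a, a⟫ + t * ‖b - a‖ ^ 2 := by
    rw [hzs, inner_add_right, real_inner_smul_right, real_inner_self_eq_norm_sq]
  constructor
  · apply mem_disk_of_inner_nonpos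
    have : zs - a = t • (b - a) := by rw [hzs]; abel
    rw [this, real_inner_smul_left, inner_sub_right]
    have : 0 < t := by linarith
    nlinarith [hkey]
  · apply mem_disk_of_inner_nonpos
    have hb : ⟪b - a, b⟫ = ⟪b - a, a⟫ + ‖b - a‖ ^ 2 := by
      have h5 : ⟪b - a, b - a⟫ = ‖b - a‖ ^ 2 := real_inner_self_eq_norm_sq _
      rw [inner_sub_right] at h5
      linarith
    rw [inner_sub_right]
    nlinarith
end

section
/- (Main theorem, three-point case) Let a, b, c, a', b', c' ∈ ℝ² and suppose {(a,a'),(b,b'),(c,c')} is a max-sum matching of {a,b,c} with {a',b',c'} for the squared Euclidean distance, i.e., for every permutation σ of (a',b',c'), ‖a-σ₁‖² + ‖b-σ₂‖² + ‖c-σ₃‖² ≤ ‖a-a'‖² + ‖b-b'‖² + ‖c-c'‖². Then the three disks B(aa'), B(bb'), B(cc') (each having the corresponding matched segment as diameter) have a common point. -/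
/-!
`⟪x - p, x - q⟫` is the power of `x` with respect to the circle on diameter `pq`, so we look for a
point of nonpositive power with respect to every circle. Maximality of the matching under
transpositions gives `⟪pᵢ - pⱼ, qᵢ - qⱼ⟫ ≤ 0`. For weights `w` in the standard simplex let
`c = ∑ wᵢ • mᵢ` be the weighted midpoint; the `w`-average of the powers of `c` equals
`∑ wᵢ ⟪pᵢ, qᵢ⟫ - ‖c‖²`, which is `≤ 0` by a Chebyshev-type covariance inequality. At a maximiser
`w` of this concave function of `w`, the first-order condition towards each vertex of the simplex
bounds the power of `c` with respect to every circle by the maximum, hence by `0`.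
-/

open scoped InnerProductSpace
open Finset Metric Filter Topology

section MaxSumMatching

variable {ι E : Type*} [NormedAddCommGroup E] [InnerProductSpace ℝ E]

theorem inner_sub_sub_eq_norm_sub_midpoint_sq_sub (x p q : E) :
    ⟪x - p, x - q⟫_ℝ = ‖x - midpoint ℝ p q‖ ^ 2 - (dist p q / 2) ^ 2 := by
  rw [dist_eq_norm, show p - q = (x - q) - (x - p) by abel,
    show x - midpoint ℝ p q = (2 : ℝ)⁻¹ • ((x - p) + (x - q)) by
      rw [midpoint_eq_smul_add, invOf_eq_inv]; module]
  generalize x - p = u, x - q = v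
  rw [norm_smul, mul_pow, div_pow, norm_add_sq_real, norm_sub_sq_real, real_inner_comm]
  norm_num
  ring

theorem mem_closedBall_midpoint_iff_inner_nonpos {x p q : E} :
    x ∈ closedBall (midpoint ℝ p q) (dist p q / 2) ↔ ⟪x - p, x - q⟫_ℝ ≤ 0 := by
  rw [inner_sub_sub_eq_norm_sub_midpoint_sq_sub, sub_nonpos, mem_closedBall, dist_eq_norm,
    sq_le_sq₀ (norm_nonneg _) (by positivity)]

theorem inner_sub_sub_eq_norm_sq_sub_two_mul_inner_midpoint_add (x p q : E) :
    ⟪x - p, x - q⟫_ℝ = ‖x‖ ^ 2 - 2 * ⟪x, midpoint ℝ p q⟫_ℝ + ⟪p, q⟫_ℝ := by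
  rw [midpoint_eq_smul_add, invOf_eq_inv, real_inner_smul_right, inner_add_right,
    inner_sub_left, inner_sub_right, inner_sub_right, real_inner_self_eq_norm_sq,
    real_inner_comm p x]
  ring

theorem nonpos_of_forall_le_mul {a b : ℝ} (h : ∀ t ∈ Set.Ioc (0 : ℝ) 1, a ≤ b * t) : a ≤ 0 := by
  have hlim : Tendsto (fun t => b * t) (𝓝[>] 0) (𝓝 0) := by
    simpa using ((continuous_const_mul b).tendsto 0).mono_left nhdsWithin_le_nhds
  exact ge_of_tendsto hlim (eventually_of_mem (Ioc_mem_nhdsGT one_pos) h)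

variable [Fintype ι]

theorem sum_mul_inner_le_inner_sum_smul_sum_smul {w : ι → ℝ} (hw : w ∈ stdSimplex ℝ ι)
    {p q : ι → E} (h : ∀ i j, ⟪p i - p j, q i - q j⟫_ℝ ≤ 0) :
    ∑ i, w i * ⟪p i, q i⟫_ℝ ≤ ⟪∑ i, w i • p i, ∑ i, w i • q i⟫_ℝ := by
  have transpose : ∀ f : ι → ι → ℝ, ∑ i, ∑ j, w i * w j * f j i = ∑ i, ∑ j, w i * w j * f i j :=
    fun f => by rw [sum_comm]; simp_rw [mul_comm (w _) (w _)]
  have diag : ∀ f : ι → ℝ, ∑ i, ∑ j, w i * w j * f i = ∑ i, w i * f i := fun f => by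
    simp_rw [mul_right_comm (w _) (w _), ← mul_sum, hw.2, mul_one]
  have cross : ⟪∑ i, w i • p i, ∑ i, w i • q i⟫_ℝ = ∑ i, ∑ j, w i * w j * ⟪p j, q i⟫_ℝ := by
    simp [sum_inner, inner_sum, real_inner_smul_left, real_inner_smul_right, mul_assoc]
  have hcov : 2 * (∑ i, w i * ⟪p i, q i⟫_ℝ - ⟪∑ i, w i • p i, ∑ i, w i • q i⟫_ℝ) =
      ∑ i, ∑ j, w i * w j * ⟪p i - p j, q i - q j⟫_ℝ := by
    simp only [inner_sub_left, inner_sub_right, mul_sub, sum_sub_distrib, cross, diag,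
      transpose fun i j => ⟪p i, q i⟫_ℝ, transpose fun i j => ⟪p i, q j⟫_ℝ]
    ring
  have hnonpos : ∑ i, ∑ j, w i * w j * ⟪p i - p j, q i - q j⟫_ℝ ≤ 0 :=
    sum_nonpos fun i _ => sum_nonpos fun j _ =>
      mul_nonpos_of_nonneg_of_nonpos (mul_nonneg (hw.1 i) (hw.1 j)) (h i j)
  linarith

variable (p q : ι → E)

noncomputable def weightedMidpoint (w : ι → ℝ) : E := ∑ i, w i • midpoint ℝ (p i) (q i)

noncomputable def meanPower (w : ι → ℝ) : ℝ :=
  ∑ i, w i * ⟪weightedMidpoint p q w - p i, weightedMidpoint p q w - q i⟫_ℝ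

theorem continuous_meanPower : Continuous (meanPower p q) := by
  unfold meanPower weightedMidpoint
  fun_prop

theorem meanPower_eq {w : ι → ℝ} (hw : ∑ i, w i = 1) :
    meanPower p q w = ∑ i, w i * ⟪p i, q i⟫_ℝ - ‖weightedMidpoint p q w‖ ^ 2 := by
  have hc : ∑ i, w i * ⟪weightedMidpoint p q w, midpoint ℝ (p i) (q i)⟫_ℝ =
      ‖weightedMidpoint p q w‖ ^ 2 := by
    simp_rw [← real_inner_self_eq_norm_sq, ← real_inner_smul_right, ← inner_sum]; rfl
  simp only [meanPower, inner_sub_sub_eq_norm_sq_sub_two_mul_inner_midpoint_add, mul_add, mul_sub,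
    sum_add_distrib, sum_sub_distrib, ← sum_mul, hw, mul_left_comm _ (2 : ℝ), ← mul_sum, hc]
  ring

theorem weightedMidpoint_smul_add_smul_single [DecidableEq ι] (w : ι → ℝ) (t : ℝ) (i : ι) :
    weightedMidpoint p q ((1 - t) • w + t • Pi.single i 1) =
      (1 - t) • weightedMidpoint p q w + t • midpoint ℝ (p i) (q i) := by
  simp [weightedMidpoint, add_smul, sum_add_distrib, smul_sum, smul_smul, Pi.single_apply]

theorem inner_sub_sub_le_meanPower_of_isMaxOn {w : ι → ℝ} (hw : w ∈ stdSimplex ℝ ι)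
    (hmax : IsMaxOn (meanPower p q) (stdSimplex ℝ ι) w) (i : ι) :
    ⟪weightedMidpoint p q w - p i, weightedMidpoint p q w - q i⟫_ℝ ≤ meanPower p q w := by
  classical
  rw [meanPower_eq p q hw.2, ← sub_nonpos]
  refine nonpos_of_forall_le_mul
    (b := ‖midpoint ℝ (p i) (q i) - weightedMidpoint p q w‖ ^ 2) fun t ⟨ht0, ht1⟩ => ?_
  have hmem : (1 - t) • w + t • Pi.single i 1 ∈ stdSimplex ℝ ι :=
    convex_stdSimplex ℝ ι hw (single_mem_stdSimplex ℝ i) (by linarith) ht0.le (by ring)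
  have hsum : ∑ j, ((1 - t) • w + t • Pi.single i 1 : ι → ℝ) j * ⟪p j, q j⟫_ℝ =
      (1 - t) * ∑ j, w j * ⟪p j, q j⟫_ℝ + t * ⟪p i, q i⟫_ℝ := by
    simp [add_mul, sum_add_distrib, mul_sum, mul_assoc, Pi.single_apply]
  -- along the segment from `w` to vertex `i`, the mean power is
  -- `meanPower w + t * (power of c w.r.t. circle i - meanPower w) - t² * ‖mᵢ - c‖²`
  have hle := hmax hmem
  rw [Set.mem_ofPred_eq, meanPower_eq p q hmem.2, meanPower_eq p q hw.2,
    weightedMidpoint_smul_add_smul_single, hsum, norm_add_sq_real, norm_smul, norm_smul,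
    real_inner_smul_left, real_inner_smul_right] at hle
  simp only [Real.norm_eq_abs, mul_pow, sq_abs] at hle
  rw [inner_sub_sub_eq_norm_sq_sub_two_mul_inner_midpoint_add, norm_sub_sq_real,
    real_inner_comm (weightedMidpoint p q w)]
  refine le_of_mul_le_mul_left ?_ ht0
  linear_combination hle

theorem meanPower_nonpos {w : ι → ℝ} (hw : w ∈ stdSimplex ℝ ι)
    (h : ∀ i j, ⟪p i - p j, q i - q j⟫_ℝ ≤ 0) : meanPower p q w ≤ 0 := by
  set P := ∑ i, w i • p i
  set Q := ∑ i, w i • q i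
  have hc : weightedMidpoint p q w = midpoint ℝ P Q := by
    simp only [weightedMidpoint, midpoint_eq_smul_add, smul_add, sum_add_distrib, smul_sum,
      smul_comm (w _), P, Q]
  have hPQ : ⟪P, Q⟫_ℝ ≤ ‖midpoint ℝ P Q‖ ^ 2 := by
    have := mem_closedBall_midpoint_iff_inner_nonpos.mp
      (mem_closedBall_self (x := midpoint ℝ P Q) (by positivity : 0 ≤ dist P Q / 2))
    rw [inner_sub_sub_eq_norm_sq_sub_two_mul_inner_midpoint_add, real_inner_self_eq_norm_sq] at this
    linarith
  rw [meanPower_eq p q hw.2, hc]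
  linarith [sum_mul_inner_le_inner_sum_smul_sum_smul hw h]

theorem exists_forall_inner_sub_sub_nonpos (h : ∀ i j, ⟪p i - p j, q i - q j⟫_ℝ ≤ 0) :
    ∃ o, ∀ i, ⟪o - p i, o - q i⟫_ℝ ≤ 0 := by
  classical
  cases isEmpty_or_nonempty ι
  · exact ⟨0, isEmptyElim⟩
  obtain ⟨w, hw, hmax⟩ := (isCompact_stdSimplex ℝ ι).exists_isMaxOn
    ⟨_, single_mem_stdSimplex ℝ (Classical.arbitrary ι)⟩ (continuous_meanPower p q).continuousOn
  exact ⟨weightedMidpoint p q w, fun i =>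
    (inner_sub_sub_le_meanPower_of_isMaxOn p q hw hmax i).trans (meanPower_nonpos p q hw h)⟩

theorem inner_sub_sub_nonpos_of_forall_sum_norm_sub_sq_le
    (hmax : ∀ σ : Equiv.Perm ι, ∑ i, ‖p i - q (σ i)‖ ^ 2 ≤ ∑ i, ‖p i - q i‖ ^ 2) (i j : ι) :
    ⟪p i - p j, q i - q j⟫_ℝ ≤ 0 := by
  classical
  rcases eq_or_ne i j with rfl | hij
  · simp
  have hswap : ∑ k, (‖p k - q (Equiv.swap i j k)‖ ^ 2 - ‖p k - q k‖ ^ 2) =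
      2 * ⟪p i - p j, q i - q j⟫_ℝ := by
    rw [sum_eq_add i j hij (fun k _ hk => by simp [Equiv.swap_apply_of_ne_of_ne hk.1 hk.2])
      (by simp) (by simp)]
    simp only [Equiv.swap_apply_left, Equiv.swap_apply_right, norm_sub_sq_real, inner_sub_left,
      inner_sub_right]
    ring
  linarith [hmax (Equiv.swap i j), sum_sub_distrib (s := univ)
    (fun k => ‖p k - q (Equiv.swap i j k)‖ ^ 2) (fun k => ‖p k - q k‖ ^ 2)]

theorem exists_forall_mem_closedBall_midpoint_of_forall_sum_norm_sub_sq_le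
    (hmax : ∀ σ : Equiv.Perm ι, ∑ i, ‖p i - q (σ i)‖ ^ 2 ≤ ∑ i, ‖p i - q i‖ ^ 2) :
    ∃ o, ∀ i, o ∈ closedBall (midpoint ℝ (p i) (q i)) (dist (p i) (q i) / 2) := by
  simp only [mem_closedBall_midpoint_iff_inner_nonpos]
  exact exists_forall_inner_sub_sub_nonpos p q
    (inner_sub_sub_nonpos_of_forall_sum_norm_sub_sq_le p q hmax)

end MaxSumMatching

theorem maxsum_three_disks_common_point
    (a b c a' b' c' : EuclideanSpace ℝ (Fin 2))
    (hmax : ∀ σ : Equiv.Perm (Fin 3),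
      ∑ i, ‖![a, b, c] i - ![a', b', c'] (σ i)‖ ^ 2 ≤
        ‖a - a'‖ ^ 2 + ‖b - b'‖ ^ 2 + ‖c - c'‖ ^ 2) :
    ∃ o : EuclideanSpace ℝ (Fin 2),
      o ∈ Metric.closedBall (midpoint ℝ a a') (dist a a' / 2) ∧
      o ∈ Metric.closedBall (midpoint ℝ b b') (dist b b' / 2) ∧
      o ∈ Metric.closedBall (midpoint ℝ c c') (dist c c' / 2) := by
  obtain ⟨o, ho⟩ := exists_forall_mem_closedBall_midpoint_of_forall_sum_norm_sub_sq_le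
    ![a, b, c] ![a', b', c'] fun σ => (hmax σ).trans_eq (by simp [Fin.sum_univ_three])
  exact ⟨o, ho 0, ho 1, ho 2⟩
end

section
/- (Huemer et al.) Let R and B be finite point sets in ℝ² with |R| = |B| = n ≥ 1, and let M be a perfect matching between R and B maximizing the total squared Euclidean distance Σ ‖r - b‖² over matched pairs (r,b). Then the n closed disks B(rb), each having a matched segment rb as diameter, have a common point. -/
/-!
By maximality, swapping the partners of two matched pairs cannot increase the total, which in
inner-product form reads `⟪rᵢ, bᵢ⟫ + ⟪rⱼ, bⱼ⟫ ≤ ⟪rᵢ, bⱼ⟫ + ⟪rⱼ, bᵢ⟫`. With `mᵢ` the midpoints, consider on the standard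
simplex the concave function `h w = ∑ wᵢ ⟪rᵢ, bᵢ⟫ - ‖∑ wᵢ mᵢ‖²`. The swap inequalities make
`h ≤ 0`. At a maximiser `w₀`, put `o = ∑ w₀ᵢ mᵢ`; comparing with the vertex `eᵢ` along the segment
gives `h eᵢ + ‖mᵢ - o‖² ≤ h w₀ ≤ 0`, and `h eᵢ = -‖rᵢ - bᵢ‖² / 4`, so `o` lies in every disk.
No reduction to three disks via Helly's theorem is needed.
-/

open Finset Filter Topology
open scoped RealInnerProductSpace

variable {E : Type*} [NormedAddCommGroup E] [InnerProductSpace ℝ E]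

theorem norm_midpoint_sq (x y : E) : ‖midpoint ℝ x y‖ ^ 2 = ⟪x, y⟫ + (dist x y / 2) ^ 2 := by
  rw [midpoint_eq_smul_add, norm_smul, dist_eq_norm, mul_pow, div_pow, norm_add_sq_real,
    norm_sub_sq_real]
  norm_num
  ring

theorem Equiv.add_le_add_of_forall_sum_le {α β : Type*} [Fintype α] (f : α → β → ℝ) (e : α ≃ β)
    (hmax : ∀ e' : α ≃ β, ∑ a, f a (e' a) ≤ ∑ a, f a (e a)) (i j : α) :
    f i (e j) + f j (e i) ≤ f i (e i) + f j (e j) := by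
  classical
  rcases eq_or_ne i j with rfl | hij
  · exact le_rfl
  have hdiff : ∑ a, (f a (e (Equiv.swap i j a)) - f a (e a)) =
      (f i (e j) - f i (e i)) + (f j (e i) - f j (e j)) := by
    rw [Fintype.sum_eq_add i j hij fun a ha => by
      rw [Equiv.swap_apply_of_ne_of_ne ha.1 ha.2, sub_self], Equiv.swap_apply_left,
      Equiv.swap_apply_right]
  have hle := hmax ((Equiv.swap i j).trans e)
  rw [sum_sub_distrib] at hdiff
  simp only [Equiv.trans_apply] at hle
  linarith

theorem sum_mul_diag_le_sum_sum_mul_of_mem_stdSimplex {ι : Type*} [Fintype ι] {K : ι → ι → ℝ}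
    (hK : ∀ i j, K i i + K j j ≤ K i j + K j i) {w : ι → ℝ} (hw : w ∈ stdSimplex ℝ ι) :
    ∑ i, w i * K i i ≤ ∑ i, ∑ j, w i * w j * K i j := by
  have hdiag : ∑ i, w i * K i i = ∑ i, ∑ j, w i * w j * K i i := by
    refine sum_congr rfl fun i _ => ?_
    rw [← sum_mul, ← mul_sum, hw.2, mul_one]
  have hdiag' : ∑ i, w i * K i i = ∑ i, ∑ j, w i * w j * K j j := by
    rw [hdiag, sum_comm]
    simp only [mul_comm (w _) (w _)]
  have hflip : ∑ i, ∑ j, w i * w j * K i j = ∑ i, ∑ j, w i * w j * K j i := by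
    rw [sum_comm]
    simp only [mul_comm (w _) (w _)]
  have hsum : ∑ i, ∑ j, w i * w j * (K i i + K j j) ≤ ∑ i, ∑ j, w i * w j * (K i j + K j i) :=
    sum_le_sum fun i _ => sum_le_sum fun j _ =>
      mul_le_mul_of_nonneg_left (hK i j) (mul_nonneg (hw.1 i) (hw.1 j))
  simp only [mul_add, sum_add_distrib] at hsum
  linarith

theorem IsMaxOn.add_norm_sub_sq_le {V : Type*} [AddCommGroup V] [Module ℝ V]
    {L : V →ₗ[ℝ] ℝ} {T : V →ₗ[ℝ] E} {s : Set V} {w₀ w : V}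
    (hmax : IsMaxOn (fun v => L v - ‖T v‖ ^ 2) s w₀) (hs : Convex ℝ s) (hw₀ : w₀ ∈ s)
    (hw : w ∈ s) :
    L w - ‖T w‖ ^ 2 + ‖T w - T w₀‖ ^ 2 ≤ L w₀ - ‖T w₀‖ ^ 2 := by
  set d := T w - T w₀
  set D := L w - L w₀ - 2 * ⟪T w₀, d⟫
  have hstep : ∀ t ∈ Set.Ioc (0 : ℝ) 1, D ≤ t * ‖d‖ ^ 2 := by
    intro t ht
    have hle : L (w₀ + t • (w - w₀)) - ‖T (w₀ + t • (w - w₀))‖ ^ 2 ≤ L w₀ - ‖T w₀‖ ^ 2 :=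
      hmax (hs.add_smul_sub_mem hw₀ hw (Set.Ioc_subset_Icc_self ht))
    rw [map_add, map_add, map_smul, map_smul, map_sub, map_sub, norm_add_sq_real, norm_smul,
      inner_smul_right, smul_eq_mul, Real.norm_eq_abs, mul_pow, sq_abs] at hle
    nlinarith [ht.1]
  have hD : D ≤ 0 := by
    have hlim : Tendsto (fun t : ℝ => t * ‖d‖ ^ 2) (𝓝[>] 0) (𝓝 0) :=
      tendsto_nhdsWithin_of_tendsto_nhds ((continuous_mul_const _).tendsto' 0 0 (zero_mul _))
    exact ge_of_tendsto hlim (eventually_of_mem (Ioc_mem_nhdsGT one_pos) hstep)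
  have hTw : T w = T w₀ + d := (add_sub_cancel _ _).symm
  rw [hTw, norm_add_sq_real]
  linarith

theorem sum_mul_inner_le_norm_sum_smul_midpoint_sq {ι : Type*} [Fintype ι] {r b : ι → E}
    (hswap : ∀ i j, ⟪r i, b i⟫ + ⟪r j, b j⟫ ≤ ⟪r i, b j⟫ + ⟪r j, b i⟫) {w : ι → ℝ}
    (hw : w ∈ stdSimplex ℝ ι) :
    ∑ i, w i * ⟪r i, b i⟫ ≤ ‖∑ i, w i • midpoint ℝ (r i) (b i)‖ ^ 2 := by
  have hmid :
      ∑ i, w i • midpoint ℝ (r i) (b i) = midpoint ℝ (∑ i, w i • r i) (∑ i, w i • b i) := by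
    simp only [midpoint_eq_smul_add, smul_add, sum_add_distrib, smul_sum, smul_comm (w _)]
  have hinner : ⟪∑ i, w i • r i, ∑ j, w j • b j⟫ = ∑ i, ∑ j, w i * w j * ⟪r i, b j⟫ := by
    rw [sum_inner]
    simp only [inner_sum, real_inner_smul_left, real_inner_smul_right]
    exact sum_congr rfl fun i _ => sum_congr rfl fun j _ => by ring
  calc ∑ i, w i * ⟪r i, b i⟫ ≤ ∑ i, ∑ j, w i * w j * ⟪r i, b j⟫ :=
        sum_mul_diag_le_sum_sum_mul_of_mem_stdSimplex (K := fun i j => ⟪r i, b j⟫) hswap hw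
    _ ≤ ‖∑ i, w i • midpoint ℝ (r i) (b i)‖ ^ 2 := by
        rw [hmid, norm_midpoint_sq, hinner]
        exact le_add_of_nonneg_right (sq_nonneg _)

theorem exists_forall_dist_midpoint_le_half_dist {ι : Type*} [Fintype ι] (r b : ι → E)
    (hswap : ∀ i j, ⟪r i, b i⟫ + ⟪r j, b j⟫ ≤ ⟪r i, b j⟫ + ⟪r j, b i⟫) :
    ∃ o, ∀ i, dist o (midpoint ℝ (r i) (b i)) ≤ dist (r i) (b i) / 2 := by
  classical
  obtain _ | _ := isEmpty_or_nonempty ι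
  · exact ⟨0, isEmptyElim⟩
  set L := Fintype.linearCombination ℝ fun i => ⟪r i, b i⟫
  set T := Fintype.linearCombination ℝ fun i => midpoint ℝ (r i) (b i)
  have hcont : Continuous fun w => L w - ‖T w‖ ^ 2 := by fun_prop
  obtain ⟨w₀, hw₀, hmax⟩ := (isCompact_stdSimplex ℝ ι).exists_isMaxOn
    ⟨_, single_mem_stdSimplex ℝ (Classical.arbitrary ι)⟩ hcont.continuousOn
  have hnonpos : L w₀ - ‖T w₀‖ ^ 2 ≤ 0 :=
    sub_nonpos.2 (sum_mul_inner_le_norm_sum_smul_midpoint_sq hswap hw₀)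
  refine ⟨T w₀, fun i => ?_⟩
  have hi := hmax.add_norm_sub_sq_le (convex_stdSimplex ℝ ι) hw₀ (single_mem_stdSimplex ℝ i)
  rw [Fintype.linearCombination_apply_single, Fintype.linearCombination_apply_single, one_smul,
    one_smul, norm_midpoint_sq, ← dist_eq_norm, dist_comm (midpoint ℝ _ _)] at hi
  exact le_of_sq_le_sq (by linarith) (by positivity)

theorem huemer_maxsum_matching_disks_common_point_general
    (R B : Finset (EuclideanSpace ℝ (Fin 2)))
    (M : (R : Finset (EuclideanSpace ℝ (Fin 2))) ≃ (B : Finset (EuclideanSpace ℝ (Fin 2))))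
    (hmax : ∀ N : (R : Finset (EuclideanSpace ℝ (Fin 2))) ≃ (B : Finset (EuclideanSpace ℝ (Fin 2))),
      ∑ r : (R : Finset (EuclideanSpace ℝ (Fin 2))), ‖(r : EuclideanSpace ℝ (Fin 2)) - N r‖ ^ 2 ≤
        ∑ r : (R : Finset (EuclideanSpace ℝ (Fin 2))), ‖(r : EuclideanSpace ℝ (Fin 2)) - M r‖ ^ 2) :
    ∃ o : EuclideanSpace ℝ (Fin 2),
      ∀ r : (R : Finset (EuclideanSpace ℝ (Fin 2))),
        o ∈ Metric.closedBall (midpoint ℝ (r : EuclideanSpace ℝ (Fin 2)) (M r))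
            (dist (r : EuclideanSpace ℝ (Fin 2)) (M r) / 2) := by
  have hswap (r r' : R) :
      ⟪(r : EuclideanSpace ℝ (Fin 2)), M r⟫ + ⟪(r' : EuclideanSpace ℝ (Fin 2)), M r'⟫ ≤
        ⟪(r : EuclideanSpace ℝ (Fin 2)), M r'⟫ + ⟪(r' : EuclideanSpace ℝ (Fin 2)), M r⟫ := by
    have h := M.add_le_add_of_forall_sum_le
      (fun (r : R) (b : B) => ‖(r : EuclideanSpace ℝ (Fin 2)) - b‖ ^ 2) hmax r r'
    simp only [norm_sub_sq_real] at h
    linarith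
  obtain ⟨o, ho⟩ := exists_forall_dist_midpoint_le_half_dist _ _ hswap
  exact ⟨o, fun r => Metric.mem_closedBall.2 (ho r)⟩

theorem huemer_maxsum_matching_disks_common_point
    (n : ℕ) (hn : 1 ≤ n)
    (R B : Finset (EuclideanSpace ℝ (Fin 2)))
    (hR : R.card = n) (hB : B.card = n)
    (M : (R : Finset (EuclideanSpace ℝ (Fin 2))) ≃ (B : Finset (EuclideanSpace ℝ (Fin 2))))
    (hmax : ∀ N : (R : Finset (EuclideanSpace ℝ (Fin 2))) ≃ (B : Finset (EuclideanSpace ℝ (Fin 2))),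
      ∑ r : (R : Finset (EuclideanSpace ℝ (Fin 2))), ‖(r : EuclideanSpace ℝ (Fin 2)) - N r‖ ^ 2 ≤
        ∑ r : (R : Finset (EuclideanSpace ℝ (Fin 2))), ‖(r : EuclideanSpace ℝ (Fin 2)) - M r‖ ^ 2) :
    ∃ o : EuclideanSpace ℝ (Fin 2),
      ∀ r : (R : Finset (EuclideanSpace ℝ (Fin 2))),
        o ∈ Metric.closedBall (midpoint ℝ (r : EuclideanSpace ℝ (Fin 2)) (M r))
            (dist (r : EuclideanSpace ℝ (Fin 2)) (M r) / 2) :=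
  huemer_maxsum_matching_disks_common_point_general R B M hmax
end

section
/- (Collinear case) Let a, b, c ∈ ℝ² be collinear with b on segment ac, let a', b', c' ∈ ℝ², and suppose {(a,a'),(b,b'),(c,c')} is a max-sum matching of {a,b,c} and {a',b',c'} for the squared Euclidean distance. Then the disks B(aa'), B(bb'), B(cc') have a common point; moreover a common point can be found on the line through a and c or equal to a or c. -/
/-!
Exchanging the partners of two matched pairs `(p, p')`, `(q, q')` changes the total of squared
distances by `2 ⟪p - q, p' - q'⟫`, so in a max-sum matching `⟪p - q, p' - q'⟫ ≤ 0`; and a point `o`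
lies in `B(pp')` iff `⟪o - p, o - p'⟫ ≤ 0`. When `o`, `p`, `q` lie on the line `ac`, both inner
products only see the orthogonal projections `π p'`, `π q'` onto that line. In a coordinate on
the line, the disks therefore meet it in the intervals `[p, π p']`, the first inequality says that
these intervals pairwise intersect, and pairwise intersecting intervals have a common point.
-/

open RealInnerProductSpace Set AffineMap

section Interval

theorem Set.Icc_inter_Icc_inter_Icc_nonempty {α : Type*} [Lattice α] {l₁ u₁ l₂ u₂ l₃ u₃ : α}
    (h₁₂ : (Icc l₁ u₁ ∩ Icc l₂ u₂).Nonempty) (h₁₃ : (Icc l₁ u₁ ∩ Icc l₃ u₃).Nonempty)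
    (h₂₃ : (Icc l₂ u₂ ∩ Icc l₃ u₃).Nonempty) :
    (Icc l₁ u₁ ∩ Icc l₂ u₂ ∩ Icc l₃ u₃).Nonempty := by
  simp only [Icc_inter_Icc, nonempty_Icc, sup_le_iff, le_inf_iff] at *
  tauto

variable {α : Type*} [Ring α] [LinearOrder α] [IsStrictOrderedRing α]

theorem Set.mem_uIcc_iff_mul_nonpos {t x y : α} : t ∈ uIcc x y ↔ (t - x) * (t - y) ≤ 0 := by
  rw [mem_uIcc, mul_nonpos_iff, sub_nonneg, sub_nonpos, sub_nonneg, sub_nonpos]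
  tauto

theorem Set.uIcc_inter_uIcc_nonempty_of_mul_nonpos {x y X Y : α} (h : (x - y) * (X - Y) ≤ 0) :
    (uIcc x X ∩ uIcc y Y).Nonempty := by
  rw [uIcc, uIcc, Icc_inter_Icc, nonempty_Icc, sup_le_iff, le_inf_iff, le_inf_iff]
  refine ⟨⟨inf_le_sup, ?_⟩, ?_, inf_le_sup⟩
  · by_contra! h'
    simp only [lt_inf_iff, sup_lt_iff] at h'
    exact h.not_gt (mul_pos (sub_pos.2 h'.1.1) (sub_pos.2 h'.2.2))
  · by_contra! h'
    simp only [lt_inf_iff, sup_lt_iff] at h'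
    exact h.not_gt (mul_pos_of_neg_of_neg (sub_neg.2 h'.1.1) (sub_neg.2 h'.2.2))

theorem exists_mem_uIcc_of_mul_nonpos {x y z X Y Z : α} (hxy : (x - y) * (X - Y) ≤ 0)
    (hyz : (y - z) * (Y - Z) ≤ 0) (hxz : (x - z) * (X - Z) ≤ 0) :
    ∃ t, t ∈ uIcc x X ∧ t ∈ uIcc y Y ∧ t ∈ uIcc z Z := by
  obtain ⟨t, ⟨hx, hy⟩, hz⟩ := Icc_inter_Icc_inter_Icc_nonempty
    (uIcc_inter_uIcc_nonempty_of_mul_nonpos hxy) (uIcc_inter_uIcc_nonempty_of_mul_nonpos hxz)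
    (uIcc_inter_uIcc_nonempty_of_mul_nonpos hyz)
  exact ⟨t, hx, hy, hz⟩

end Interval

variable {E : Type*} [NormedAddCommGroup E] [InnerProductSpace ℝ E]

/-- The disk `B(pq)`. -/
def diameterBall (p q : E) : Set E :=
  Metric.closedBall (midpoint ℝ p q) (dist p q / 2)

theorem dist_midpoint_sq (o p q : E) :
    dist o (midpoint ℝ p q) ^ 2 = (dist p q / 2) ^ 2 + ⟪o - p, o - q⟫ := by
  rw [dist_eq_norm, dist_eq_norm, midpoint_eq_smul_add, div_pow, ← real_inner_self_eq_norm_sq,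
    ← real_inner_self_eq_norm_sq]
  simp only [inner_sub_left, inner_sub_right, inner_add_left, inner_add_right,
    real_inner_smul_left, real_inner_smul_right, invOf_eq_inv, real_inner_comm p o, real_inner_comm q o,
    real_inner_comm q p]
  ring

theorem mem_diameterBall_iff {o p q : E} : o ∈ diameterBall p q ↔ ⟪o - p, o - q⟫ ≤ 0 := by
  rw [diameterBall, Metric.mem_closedBall,
    ← sq_le_sq₀ dist_nonneg (div_nonneg dist_nonneg zero_le_two), dist_midpoint_sq]
  exact add_le_iff_nonpos_right _

theorem norm_sub_sq_add_norm_sub_sq_swap (p q p' q' : E) :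
    ‖p - q'‖ ^ 2 + ‖q - p'‖ ^ 2 = ‖p - p'‖ ^ 2 + ‖q - q'‖ ^ 2 + 2 * ⟪p - q, p' - q'⟫ := by
  simp only [norm_sub_sq_real, inner_sub_left, inner_sub_right, real_inner_comm p' q]
  ring

section Matching

variable {ι : Type*} [Fintype ι]

def IsMaxSumMatching (p p' : ι → E) : Prop :=
  ∀ σ : Equiv.Perm ι, ∑ i, ‖p i - p' (σ i)‖ ^ 2 ≤ ∑ i, ‖p i - p' i‖ ^ 2

theorem IsMaxSumMatching.inner_sub_sub_nonpos [DecidableEq ι] {p p' : ι → E}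
    (h : IsMaxSumMatching p p') (i j : ι) : ⟪p i - p j, p' i - p' j⟫ ≤ 0 := by
  rcases eq_or_ne i j with rfl | hij
  · simp
  have hswap : ∑ k, ‖p k - p' (Equiv.swap i j k)‖ ^ 2 - ∑ k, ‖p k - p' k‖ ^ 2 =
      2 * ⟪p i - p j, p' i - p' j⟫ := by
    rw [← Finset.sum_sub_distrib, Fintype.sum_eq_add i j hij fun k hk => by
      simp [Equiv.swap_apply_of_ne_of_ne hk.1 hk.2]]
    simp only [Equiv.swap_apply_left, Equiv.swap_apply_right]
    linarith [norm_sub_sq_add_norm_sub_sq_swap (p i) (p j) (p' i) (p' j)]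
  linarith [h (Equiv.swap i j)]

end Matching

section Line

/-- The parameter, in `lineMap a c`, of the orthogonal projection of `q` onto the line `ac`
(junk value `0` when `a = c`). -/
noncomputable def lineCoord (a c q : E) : ℝ :=
  ⟪c - a, q - a⟫ / ‖c - a‖ ^ 2

theorem inner_sub_eq_norm_sq_mul_lineCoord (a c q : E) :
    ⟪c - a, q - a⟫ = ‖c - a‖ ^ 2 * lineCoord a c q := by
  rcases eq_or_ne c a with rfl | h
  · simp
  · rw [lineCoord, mul_div_cancel₀]
    exact pow_ne_zero 2 (norm_ne_zero_iff.2 (sub_ne_zero.2 h))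

theorem lineMap_sub_lineMap (a c : E) (s r : ℝ) :
    lineMap a c s - lineMap a c r = (s - r) • (c - a) := by
  rw [lineMap_apply_module', lineMap_apply_module', sub_smul]
  abel

theorem inner_lineMap_sub_lineMap (a c q q' : E) (s r : ℝ) :
    ⟪lineMap a c s - lineMap a c r, q - q'⟫ =
      ‖c - a‖ ^ 2 * ((s - r) * (lineCoord a c q - lineCoord a c q')) := by
  rw [lineMap_sub_lineMap, real_inner_smul_left, ← sub_sub_sub_cancel_right q q' a,
    inner_sub_right, inner_sub_eq_norm_sq_mul_lineCoord, inner_sub_eq_norm_sq_mul_lineCoord]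
  ring

theorem lineCoord_lineMap {a c : E} (h : a ≠ c) (t : ℝ) : lineCoord a c (lineMap a c t) = t := by
  rw [lineCoord, lineMap_apply_module', add_sub_cancel_right, real_inner_smul_right,
    real_inner_self_eq_norm_sq, mul_div_cancel_right₀]
  exact pow_ne_zero 2 (norm_ne_zero_iff.2 (sub_ne_zero.2 h.symm))

theorem exists_lineMap_mem_diameterBall {a c : E} (hac : a ≠ c) {s₁ s₂ s₃ : ℝ} {q₁ q₂ q₃ : E}
    (h₁₂ : ⟪lineMap a c s₁ - lineMap a c s₂, q₁ - q₂⟫ ≤ 0)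
    (h₂₃ : ⟪lineMap a c s₂ - lineMap a c s₃, q₂ - q₃⟫ ≤ 0)
    (h₁₃ : ⟪lineMap a c s₁ - lineMap a c s₃, q₁ - q₃⟫ ≤ 0) :
    ∃ t : ℝ, lineMap a c t ∈ diameterBall (lineMap a c s₁) q₁ ∧
      lineMap a c t ∈ diameterBall (lineMap a c s₂) q₂ ∧
      lineMap a c t ∈ diameterBall (lineMap a c s₃) q₃ := by
  have hK : 0 < ‖c - a‖ ^ 2 := pow_pos (norm_pos_iff.2 (sub_ne_zero.2 hac.symm)) 2
  have hcoord {s r : ℝ} {q q' : E} (h : ⟪lineMap a c s - lineMap a c r, q - q'⟫ ≤ 0) :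
      (s - r) * (lineCoord a c q - lineCoord a c q') ≤ 0 := by
    rw [inner_lineMap_sub_lineMap] at h
    exact nonpos_of_mul_nonpos_right h hK
  have hball {t s : ℝ} {q : E} (ht : t ∈ uIcc s (lineCoord a c q)) :
      lineMap a c t ∈ diameterBall (lineMap a c s) q := by
    rw [mem_diameterBall_iff, inner_lineMap_sub_lineMap, lineCoord_lineMap hac]
    exact mul_nonpos_of_nonneg_of_nonpos hK.le (mem_uIcc_iff_mul_nonpos.1 ht)
  obtain ⟨t, ht₁, ht₂, ht₃⟩ :=
    exists_mem_uIcc_of_mul_nonpos (hcoord h₁₂) (hcoord h₂₃) (hcoord h₁₃)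
  exact ⟨t, hball ht₁, hball ht₂, hball ht₃⟩

end Line

theorem maxsum_collinear_case
    (a b c a' b' c' : EuclideanSpace ℝ (Fin 2))
    (hcol : b ∈ segment ℝ a c)
    (hmax : ∀ σ : Equiv.Perm (Fin 3),
      ∑ i, ‖![a, b, c] i - ![a', b', c'] (σ i)‖ ^ 2 ≤
        ‖a - a'‖ ^ 2 + ‖b - b'‖ ^ 2 + ‖c - c'‖ ^ 2) :
    ∃ o : EuclideanSpace ℝ (Fin 2),
      o ∈ Metric.closedBall (midpoint ℝ a a') (dist a a' / 2) ∧
      o ∈ Metric.closedBall (midpoint ℝ b b') (dist b b' / 2) ∧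
      o ∈ Metric.closedBall (midpoint ℝ c c') (dist c c' / 2) ∧
      (o ∈ line[ℝ, a, c] ∨ o = a ∨ o = c) := by
  rcases eq_or_ne a c with rfl | hne
  · obtain rfl : b = a := by simpa using hcol
    exact ⟨b, mem_diameterBall_iff.2 (by simp), mem_diameterBall_iff.2 (by simp),
      mem_diameterBall_iff.2 (by simp), Or.inr (Or.inl rfl)⟩
  obtain ⟨s, -, rfl⟩ : b ∈ lineMap a c '' Icc (0 : ℝ) 1 := segment_eq_image_lineMap ℝ a c ▸ hcol
  have hM : IsMaxSumMatching ![a, lineMap a c s, c] ![a', b', c'] := fun σ => by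
    simpa [Fin.sum_univ_three] using hmax σ
  obtain ⟨t, ht⟩ := exists_lineMap_mem_diameterBall hne (s₁ := 0) (s₂ := s) (s₃ := 1)
    (by simpa using hM.inner_sub_sub_nonpos 0 1) (by simpa using hM.inner_sub_sub_nonpos 1 2)
    (by simpa using hM.inner_sub_sub_nonpos 0 2)
  rw [lineMap_apply_zero, lineMap_apply_one] at ht
  exact ⟨lineMap a c t, ht.1, ht.2.1, ht.2.2, Or.inl (lineMap_mem_affineSpan_pair t a c)⟩
end

section
/- Let p, q ∈ ℝ² be distinct, let o be a point in the closed disk B(pq) with diameter pq. Then ‖p - o‖ + ‖q - o‖ ≤ √2 · ‖p - q‖. -/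
theorem disk_point_sum_dist_le_sqrt_two
    (p q o : EuclideanSpace ℝ (Fin 2)) (hpq : p ≠ q)
    (ho : o ∈ Metric.closedBall (midpoint ℝ p q) (dist p q / 2)) :
    dist p o + dist q o ≤ Real.sqrt 2 * dist p q := by
  have hm : dist (midpoint ℝ p q) o ≤ dist p q / 2 := by
    rw [dist_comm]; simpa using ho
  have hpar := parallelogram_law_with_norm ℝ (p - o) (q - o)
  have h1 : dist (midpoint ℝ p q) o = ‖(p - o) + (q - o)‖ / 2 := by
    rw [dist_eq_norm, midpoint_eq_smul_add]
    rw [show (⅟2 : ℝ) • (p + q) - o = (⅟2 : ℝ) • ((p - o) + (q - o)) by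
      rw [invOf_eq_inv]; module]
    rw [norm_smul]
    norm_num
    ring
  have h2 : ‖(p - o) - (q - o)‖ = dist p q := by
    rw [dist_eq_norm]; congr 1; abel
  have hs : Real.sqrt 2 ^ 2 = 2 := Real.sq_sqrt (by norm_num)
  have hs0 : (0:ℝ) ≤ Real.sqrt 2 := Real.sqrt_nonneg 2
  have hd : (0:ℝ) ≤ dist p q := dist_nonneg
  have hab : ‖(p - o) + (q - o)‖ ≤ dist p q := by linarith [h1 ▸ hm]
  rw [dist_eq_norm p o, dist_eq_norm q o]
  have h3 : ‖p - o‖ ^ 2 + ‖q - o‖ ^ 2 ≤ dist p q ^ 2 := by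
    nlinarith [mul_self_le_mul_self (norm_nonneg ((p - o) + (q - o))) hab]
  have h4 : (‖p - o‖ + ‖q - o‖) ^ 2 ≤ (Real.sqrt 2 * dist p q) ^ 2 := by
    have : (Real.sqrt 2 * dist p q) ^ 2 = 2 * dist p q ^ 2 := by
      rw [mul_pow, hs]
    nlinarith [sq_nonneg (‖p - o‖ - ‖q - o‖)]
  calc ‖p - o‖ + ‖q - o‖ = Real.sqrt ((‖p - o‖ + ‖q - o‖) ^ 2) :=
        (Real.sqrt_sq (by positivity)).symm
    _ ≤ Real.sqrt ((Real.sqrt 2 * dist p q) ^ 2) := Real.sqrt_le_sqrt h4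
    _ = Real.sqrt 2 * dist p q := Real.sqrt_sq (by positivity)
end

section
/- Let d(p,q) = ‖p - q‖ be the Euclidean distance on ℝ², and fix distinct points p, q and a real constant t with |t| ≤ ‖p - q‖. Then the level set {z ∈ ℝ² : ‖p - z‖ - ‖q - z‖ = t} is a connected subset of ℝ² (a branch of a hyperbola with foci p and q, or the perpendicular bisector, or a ray). -/
/-!
Write `p = m - c • u`, `q = m + c • u` with `‖u‖ = 1`, and every point as `z = m + x • u + w` with
`w ⊥ u`. Then `dist p z - dist q z = √((x + c)² + ‖w‖²) - √((x - c)² + ‖w‖²)`, and for `|t| < 2c`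
this equals `t` exactly when `x = (t / 2) √(1 + ‖w‖² / (c² - (t / 2)²))`: the level set is the graph
of a continuous function on the hyperplane `uᗮ`, a hyperbola branch (or the bisector when `t = 0`).
For `t = 2c` the equation forces `w = 0` and `x ≥ c`, a ray; `t = -2c` follows by swapping `p`
and `q`. Both are continuous images of connected sets.
-/

open Real Set

theorem sqrt_sub_sqrt_eq_two_mul_iff_of_abs_lt {a c x s : ℝ} (hs : 0 ≤ s) (hac : |a| < c) :
    √((x + c) ^ 2 + s) - √((x - c) ^ 2 + s) = 2 * a ↔ x = a * √(1 + s / (c ^ 2 - a ^ 2)) := by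
  have hc : 0 < c := (abs_nonneg a).trans_lt hac
  have hca : 0 < c ^ 2 - a ^ 2 := by nlinarith [sq_abs a, abs_nonneg a]
  set k := √(1 + s / (c ^ 2 - a ^ 2))
  have hk_sq : k ^ 2 * (c ^ 2 - a ^ 2) = c ^ 2 - a ^ 2 + s := by
    rw [sq_sqrt (by positivity)]; field_simp
  have hk : 1 ≤ k := one_le_sqrt.mpr (by simp only [le_add_iff_nonneg_right]; positivity)
  constructor
  · intro h
    set P := √((x + c) ^ 2 + s)
    set Q := √((x - c) ^ 2 + s)
    have hP : P ^ 2 = (x + c) ^ 2 + s := sq_sqrt (by positivity)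
    have hQ : Q ^ 2 = (x - c) ^ 2 + s := sq_sqrt (by positivity)
    -- divide `P² - Q² = 4cx` by `P - Q = 2a`
    have haP : a * P = c * x + a ^ 2 := by
      linear_combination (hP - hQ) / 4 + (a / 2 - (P + Q) / 4) * h
    have hax : 0 ≤ a * x := by
      have h2cx : 2 * c * x = a * (P + Q) := by linear_combination -2 * haP + a * h
      have : c * (a * x) = a ^ 2 * (P + Q) / 2 := by linear_combination (a / 2) * h2cx
      exact (mul_nonneg_iff_of_pos_left hc).mp (this ▸ by positivity)
    have hx_sq : x ^ 2 = (a * k) ^ 2 := by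
      refine mul_right_cancel₀ hca.ne' ?_
      linear_combination -(a * P + c * x + a ^ 2) * haP + a ^ 2 * hP - a ^ 2 * hk_sq
    -- `0 ≤ a * x` selects the root with the sign of `a`
    rcases sq_eq_sq_iff_eq_or_eq_neg.mp hx_sq with hx | hx
    · exact hx
    · rw [hx] at hax
      have ha : a = 0 := pow_eq_zero_iff two_ne_zero |>.mp <| by
        nlinarith [mul_nonneg (sq_nonneg a) (sub_nonneg.mpr hk)]
      rw [hx, ha, zero_mul, neg_zero]
  · rintro rfl
    have hP : √((a * k + c) ^ 2 + s) = c * k + a := by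
      rw [sqrt_eq_iff_eq_sq (by positivity) (by nlinarith [le_abs_self a, neg_abs_le a])]
      linear_combination -hk_sq
    have hQ : √((a * k - c) ^ 2 + s) = c * k - a := by
      rw [sqrt_eq_iff_eq_sq (by positivity) (by nlinarith [le_abs_self a, neg_abs_le a])]
      linear_combination -hk_sq
    rw [hP, hQ]; ring

theorem sqrt_sub_sqrt_eq_two_mul_self_iff {c x s : ℝ} (hc : 0 < c) (hs : 0 ≤ s) :
    √((x + c) ^ 2 + s) - √((x - c) ^ 2 + s) = 2 * c ↔ c ≤ x ∧ s = 0 := by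
  constructor
  · intro h
    set Q := √((x - c) ^ 2 + s)
    have hP : (Q + 2 * c) ^ 2 = (x + c) ^ 2 + s := by
      rw [← sq_sqrt (by positivity : 0 ≤ (x + c) ^ 2 + s)]; congr 1; linarith
    have hQ : Q ^ 2 = (x - c) ^ 2 + s := sq_sqrt (by positivity)
    have hQx : Q = x - c :=
      mul_left_cancel₀ (by positivity : 4 * c ≠ 0) (by linear_combination hP - hQ)
    exact ⟨sub_nonneg.mp (hQx ▸ sqrt_nonneg _), by nlinarith⟩
  · rintro ⟨hx, rfl⟩
    simp only [add_zero]
    rw [sqrt_sq (by linarith), sqrt_sq (by linarith)]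
    ring

section
variable {E : Type*} [NormedAddCommGroup E] [InnerProductSpace ℝ E]

theorem norm_smul_add_of_mem_orthogonal {u w : E} (hu : ‖u‖ = 1) (hw : w ∈ (ℝ ∙ u)ᗮ) (x : ℝ) :
    ‖x • u + w‖ = √(x ^ 2 + ‖w‖ ^ 2) := by
  rw [norm_add_eq_sqrt_iff_real_inner_eq_zero.mpr, norm_smul, hu]
  · simp [sq]
  · rw [real_inner_smul_left, Submodule.mem_orthogonal_singleton_iff_inner_right.mp hw, mul_zero]

theorem dist_sub_dist_add_smul_add {u w : E} (hu : ‖u‖ = 1) (hw : w ∈ (ℝ ∙ u)ᗮ) (m : E) (c x : ℝ) :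
    dist (m - c • u) (m + x • u + w) - dist (m + c • u) (m + x • u + w) =
      √((x + c) ^ 2 + ‖w‖ ^ 2) - √((x - c) ^ 2 + ‖w‖ ^ 2) := by
  rw [dist_eq_norm', dist_eq_norm', ← norm_smul_add_of_mem_orthogonal hu hw,
    ← norm_smul_add_of_mem_orthogonal hu hw]
  congr 2 <;> module

theorem exists_eq_add_smul_add_mem_orthogonal (m u z : E) :
    ∃ x : ℝ, ∃ w ∈ (ℝ ∙ u)ᗮ, z = m + x • u + w := by
  obtain ⟨y, hy, w, hw, h⟩ := (ℝ ∙ u).exists_add_mem_mem_orthogonal (z - m)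
  obtain ⟨x, rfl⟩ := Submodule.mem_span_singleton.mp hy
  exact ⟨x, w, hw, by rw [add_assoc, ← h]; abel⟩

theorem setOf_dist_sub_dist_eq_of_abs_lt {u : E} (hu : ‖u‖ = 1) (m : E) {a c : ℝ} (hac : |a| < c) :
    {z | dist (m - c • u) z - dist (m + c • u) z = 2 * a} =
      (fun w => m + (a * √(1 + ‖w‖ ^ 2 / (c ^ 2 - a ^ 2))) • u + w) '' (ℝ ∙ u)ᗮ := by
  ext z
  constructor
  · intro hz
    obtain ⟨x, w, hw, rfl⟩ := exists_eq_add_smul_add_mem_orthogonal m u z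
    rw [mem_ofPred_eq, dist_sub_dist_add_smul_add hu hw,
      sqrt_sub_sqrt_eq_two_mul_iff_of_abs_lt (sq_nonneg _) hac] at hz
    exact ⟨w, hw, by rw [hz]⟩
  · rintro ⟨w, hw, rfl⟩
    rw [mem_ofPred_eq, dist_sub_dist_add_smul_add hu hw,
      sqrt_sub_sqrt_eq_two_mul_iff_of_abs_lt (sq_nonneg _) hac]

theorem setOf_dist_sub_dist_eq_two_mul_self {u : E} (hu : ‖u‖ = 1) (m : E) {c : ℝ} (hc : 0 < c) :
    {z | dist (m - c • u) z - dist (m + c • u) z = 2 * c} = (fun x : ℝ => m + x • u) '' Ici c := by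
  ext z
  constructor
  · intro hz
    obtain ⟨x, w, hw, rfl⟩ := exists_eq_add_smul_add_mem_orthogonal m u z
    rw [mem_ofPred_eq, dist_sub_dist_add_smul_add hu hw,
      sqrt_sub_sqrt_eq_two_mul_self_iff hc (sq_nonneg _), sq_eq_zero_iff, norm_eq_zero] at hz
    exact ⟨x, hz.1, by rw [hz.2, add_zero]⟩
  · rintro ⟨x, hx, rfl⟩
    have h := dist_sub_dist_add_smul_add hu (Submodule.zero_mem _) m c x
    rw [add_zero] at h
    rw [mem_ofPred_eq, h, sqrt_sub_sqrt_eq_two_mul_self_iff hc (sq_nonneg _), norm_zero]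
    exact ⟨hx, by norm_num⟩

theorem exists_eq_sub_smul_eq_add_smul {p q : E} (hpq : p ≠ q) :
    ∃ (m u : E) (c : ℝ), ‖u‖ = 1 ∧ dist p q = 2 * c ∧ p = m - c • u ∧ q = m + c • u := by
  have hd : dist p q ≠ 0 := dist_ne_zero.mpr hpq
  refine ⟨midpoint ℝ p q, (dist p q)⁻¹ • (q - p), dist p q / 2, ?_, by ring, ?_, ?_⟩
  · rw [norm_smul, norm_inv, norm_of_nonneg dist_nonneg, ← dist_eq_norm', inv_mul_cancel₀ hd]
  all_goals
    rw [smul_smul, div_mul_eq_mul_div, mul_inv_cancel₀ hd, midpoint_eq_smul_add, invOf_eq_inv]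
    module

theorem isConnected_setOf_dist_sub_dist_eq_of_abs_lt {p q : E} {t : ℝ} (ht : |t| < dist p q) :
    IsConnected {z | dist p z - dist q z = t} := by
  obtain ⟨m, u, c, hu, hd, rfl, rfl⟩ :=
    exists_eq_sub_smul_eq_add_smul (dist_pos.mp ((abs_nonneg t).trans_lt ht))
  have hac : |t / 2| < c := by rw [abs_div, abs_two]; linarith
  rw [← mul_div_cancel₀ t two_ne_zero, setOf_dist_sub_dist_eq_of_abs_lt hu m hac]
  exact (Submodule.isPathConnected _).isConnected.image _ (by fun_prop)

theorem isConnected_setOf_dist_sub_dist_eq_dist {p q : E} (hpq : p ≠ q) :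
    IsConnected {z | dist p z - dist q z = dist p q} := by
  have hd_pos := dist_pos.mpr hpq
  obtain ⟨m, u, c, hu, hd, rfl, rfl⟩ := exists_eq_sub_smul_eq_add_smul hpq
  rw [hd, setOf_dist_sub_dist_eq_two_mul_self hu m (by linarith)]
  exact isConnected_Ici.image _ (by fun_prop)

theorem isConnected_setOf_dist_sub_dist_eq {p q : E} (hpq : p ≠ q) {t : ℝ} (ht : |t| ≤ dist p q) :
    IsConnected {z | dist p z - dist q z = t} := by
  rcases ht.lt_or_eq with ht | ht
  · exact isConnected_setOf_dist_sub_dist_eq_of_abs_lt ht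
  rcases (abs_eq dist_nonneg).mp ht with rfl | rfl
  · exact isConnected_setOf_dist_sub_dist_eq_dist hpq
  · have h : {z | dist p z - dist q z = -dist p q} = {z | dist q z - dist p z = dist q p} := by
      ext z; rw [mem_ofPred_eq, mem_ofPred_eq, ← neg_sub, neg_inj, dist_comm q p]
    rw [h]
    exact isConnected_setOf_dist_sub_dist_eq_dist hpq.symm

end

theorem dist_difference_level_set_connected
    (p q : EuclideanSpace ℝ (Fin 2)) (hpq : p ≠ q)
    (t : ℝ) (ht : |t| ≤ dist p q) :
    IsConnected {z : EuclideanSpace ℝ (Fin 2) | dist p z - dist q z = t} :=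
  isConnected_setOf_dist_sub_dist_eq hpq ht
end
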